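/- arXiv:1710.09461 — 3 statements merged into one kernel-verified Lean document; each statement's English description precedes it below -/
import Mathlib

section
/- Let P₀ and P₁ be Borel probability measures on Ω^∞ = {0,1}^ℕ, and for a sequence ω with P₀(ω^t) > 0 for all t, define D^t(ω) = P₁(ω^t)/P₀(ω^t). Fix 0 < α < ∞ and let A ⊆ Ω^∞ be measurable. If for every ω ∈ A either some prefix satisfies P₀(ω^t) = 0, or limsup_{t→∞} D^t(ω) ≥ α, then P₁(A) ≥ α·P₀(A). -/
open MeasureTheory Filter Set
open scoped ENNReal

abbrev BinSeq := ℕ → Bool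

/-- The cylinder set of all sequences sharing the first `t` coordinates with `ω`. -/
def cyl (ω : BinSeq) (t : ℕ) : Set BinSeq := {ω' | ∀ s < t, ω' s = ω s}

/-!
Fix `c < α` and an open `U ⊇ A`. Every `ω ∈ A` lies in a cylinder `C ⊆ U` with
`c · P₀(C) ≤ P₁(C)`: either a null cylinder, or one along which the likelihood ratio exceeds `c`.
The prefix-minimal such cylinders are pairwise disjoint and still cover `A`, so summing gives
`c · P₀(A) ≤ P₁(U)`. Outer regularity of `P₁` and `c ↑ α` finish the proof.
-/

section Words

variable {β : Type*}

def wordCyl (w : List β) : Set (ℕ → β) := {x | ∀ i (hi : i < w.length), x i = w[i]}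

def prefixWord (x : ℕ → β) (n : ℕ) : List β := List.ofFn fun i : Fin n => x i

lemma wordCyl_subset_of_prefix {v w : List β} (h : v <+: w) : wordCyl w ⊆ wordCyl v := by
  obtain ⟨hlen, hget⟩ := List.prefix_iff_getElem.mp h
  intro x hx i hi
  rw [hget i hi]
  exact hx i (hi.trans_le hlen)

lemma prefix_or_prefix_of_mem_wordCyl {v w : List β} {x : ℕ → β}
    (hv : x ∈ wordCyl v) (hw : x ∈ wordCyl w) : v <+: w ∨ w <+: v := by
  rcases le_total v.length w.length with hlen | hlen
  · exact .inl <| List.prefix_iff_getElem.mpr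
      ⟨hlen, fun i hi => (hv i hi).symm.trans (hw i (hi.trans_le hlen))⟩
  · exact .inr <| List.prefix_iff_getElem.mpr
      ⟨hlen, fun i hi => (hw i hi).symm.trans (hv i (hi.trans_le hlen))⟩

lemma measurableSet_wordCyl [MeasurableSpace β] [MeasurableSingletonClass β] (w : List β) :
    MeasurableSet (wordCyl w) := by
  simp only [wordCyl, ofPred_forall]
  exact .iInter fun i => .iInter fun _ =>
    measurable_pi_apply i (measurableSet_singleton _)

def prefixMinimal (G : Set (List β)) : Set (List β) := {w ∈ G | ∀ v ∈ G, v <+: w → v = w}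

lemma exists_prefixMinimal_prefix {G : Set (List β)} {w : List β} (hw : w ∈ G) :
    ∃ v ∈ prefixMinimal G, v <+: w := by
  obtain ⟨v, ⟨hvG, hvw⟩, hmin⟩ :=
    (measure List.length).wf.has_min {v ∈ G | v <+: w} ⟨w, hw, List.prefix_refl w⟩
  refine ⟨v, ⟨hvG, fun u huG huv => huv.eq_of_length ?_⟩, hvw⟩
  exact le_antisymm huv.length_le (not_lt.mp (hmin u ⟨huG, huv.trans hvw⟩))

lemma pairwiseDisjoint_prefixMinimal (G : Set (List β)) :
    (prefixMinimal G).PairwiseDisjoint wordCyl := by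
  intro w hw v hv hne
  refine disjoint_left.mpr fun {x} hxw hxv => hne ?_
  rcases prefix_or_prefix_of_mem_wordCyl hxw hxv with hwv | hvw
  · exact hv.2 w hw.1 hwv
  · exact (hw.2 v hv.1 hvw).symm

lemma biUnion_prefixMinimal_wordCyl (G : Set (List β)) :
    ⋃ w ∈ prefixMinimal G, wordCyl w = ⋃ w ∈ G, wordCyl w := by
  refine (biUnion_subset_biUnion_left fun w hw => hw.1).antisymm (iUnion₂_subset fun w hw => ?_)
  obtain ⟨v, hv, hvw⟩ := exists_prefixMinimal_prefix hw
  exact (wordCyl_subset_of_prefix hvw).trans (subset_biUnion_of_mem hv)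

lemma mul_measure_biUnion_wordCyl_le [MeasurableSpace β] [MeasurableSingletonClass β]
    [Countable β] (P₀ P₁ : Measure (ℕ → β)) {c : ℝ≥0∞} {G : Set (List β)}
    (hG : ∀ w ∈ G, c * P₀ (wordCyl w) ≤ P₁ (wordCyl w)) :
    c * P₀ (⋃ w ∈ G, wordCyl w) ≤ P₁ (⋃ w ∈ G, wordCyl w) := by
  have hcount := (prefixMinimal G).to_countable
  have hmeas : ∀ w ∈ prefixMinimal G, MeasurableSet (wordCyl w) :=
    fun w _ => measurableSet_wordCyl w
  rw [← biUnion_prefixMinimal_wordCyl,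
    measure_biUnion hcount (pairwiseDisjoint_prefixMinimal G) hmeas,
    measure_biUnion hcount (pairwiseDisjoint_prefixMinimal G) hmeas, ← ENNReal.tsum_mul_left]
  exact ENNReal.tsum_le_tsum fun w => hG w w.2.1

end Words

lemma cyl_eq_wordCyl (ω : BinSeq) (t : ℕ) : cyl ω t = wordCyl (prefixWord ω t) := by
  ext ω'
  simp [cyl, wordCyl, prefixWord, List.getElem_ofFn]

lemma mem_cyl_self (ω : BinSeq) (t : ℕ) : ω ∈ cyl ω t := fun _ _ => rfl

lemma cyl_antitone (ω : BinSeq) : Antitone (cyl ω) :=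
  fun _ _ hst _ hω' s hs => hω' s (hs.trans_le hst)

lemma eventually_cyl_subset {U : Set BinSeq} (hU : IsOpen U) {ω : BinSeq} (hω : ω ∈ U) :
    ∀ᶠ t in atTop, cyl ω t ⊆ U := by
  obtain ⟨I, u, hIu, hsub⟩ := isOpen_pi_iff.mp hU ω hω
  obtain ⟨N, hN⟩ := I.bddAbove
  refine eventually_atTop.mpr ⟨N + 1, fun t ht ω' hω' => hsub fun i hi => ?_⟩
  rw [hω' i (by linarith [hN hi])]
  exact (hIu i hi).2

lemma frequently_mul_measure_cyl_le {P₀ P₁ : Measure BinSeq} {α c : ℝ≥0∞} (hc : c < α)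
    {ω : BinSeq} (h : (∃ t, P₀ (cyl ω t) = 0) ∨
      α ≤ Filter.limsup (fun t => P₁ (cyl ω t) / P₀ (cyl ω t)) atTop) :
    ∃ᶠ t in atTop, c * P₀ (cyl ω t) ≤ P₁ (cyl ω t) := by
  rcases h with ⟨t₀, hnull⟩ | hlimsup
  · refine (eventually_atTop.mpr ⟨t₀, fun t ht => ?_⟩).frequently
    rw [measure_mono_null (cyl_antitone ω ht) hnull, mul_zero]
    exact zero_le
  · exact (frequently_lt_of_lt_limsup (by isBoundedDefault) (hc.trans_le hlimsup)).mono
      fun t hratio => ENNReal.mul_le_of_le_div hratio.le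

lemma mul_measure_le_of_isOpen {P₀ P₁ : Measure BinSeq} {α c : ℝ≥0∞} (hc : c < α)
    {A U : Set BinSeq} (h : ∀ ω ∈ A, (∃ t, P₀ (cyl ω t) = 0) ∨
      α ≤ Filter.limsup (fun t => P₁ (cyl ω t) / P₀ (cyl ω t)) atTop)
    (hU : IsOpen U) (hAU : A ⊆ U) :
    c * P₀ A ≤ P₁ U := by
  set G : Set (List Bool) := {w | wordCyl w ⊆ U ∧ c * P₀ (wordCyl w) ≤ P₁ (wordCyl w)}
  have hcover : A ⊆ ⋃ w ∈ G, wordCyl w := by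
    intro ω hω
    obtain ⟨t, hgood, hsub⟩ := ((frequently_mul_measure_cyl_le hc (h ω hω)).and_eventually
      (eventually_cyl_subset hU (hAU hω))).exists
    rw [cyl_eq_wordCyl] at hgood hsub
    exact mem_biUnion (x := prefixWord ω t) ⟨hsub, hgood⟩
      (cyl_eq_wordCyl ω t ▸ mem_cyl_self ω t)
  calc c * P₀ A ≤ c * P₀ (⋃ w ∈ G, wordCyl w) := mul_le_mul_right (measure_mono hcover) c
    _ ≤ P₁ (⋃ w ∈ G, wordCyl w) := mul_measure_biUnion_wordCyl_le P₀ P₁ fun w hw => hw.2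
    _ ≤ P₁ U := measure_mono (iUnion₂_subset fun w hw => hw.1)

theorem measure_ge_of_limsup_ratio_ge_general
    (P₀ P₁ : Measure BinSeq) [IsProbabilityMeasure P₁]
    (α : ℝ≥0∞)
    (A : Set BinSeq)
    (h : ∀ ω ∈ A, (∃ t, P₀ (cyl ω t) = 0) ∨
      α ≤ Filter.limsup (fun t => P₁ (cyl ω t) / P₀ (cyl ω t)) atTop) :
    α * P₀ A ≤ P₁ A := by
  have hlt : ∀ c < α, c * P₀ A ≤ P₁ A := fun c hc => by
    rw [A.measure_eq_iInf_isOpen P₁]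
    exact le_iInf₂ fun U hAU => le_iInf fun hU => mul_measure_le_of_isOpen hc h hU hAU
  exact ENNReal.mul_le_of_forall_lt fun c hc b hb => (mul_le_mul_right hb.le c).trans (hlt c hc)

/-- Lemma (comparison via limsup): if for every `ω ∈ A` either some prefix has
`P₀(ω^t) = 0`, or the limsup of the likelihood ratio is at least `α`, then
`P₁(A) ≥ α · P₀(A)`. -/
theorem measure_ge_of_limsup_ratio_ge
    (P₀ P₁ : Measure BinSeq) [IsProbabilityMeasure P₀] [IsProbabilityMeasure P₁]
    (α : ℝ≥0∞) (hα0 : 0 < α) (hαtop : α ≠ ⊤)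
    (A : Set BinSeq) (hA : MeasurableSet A)
    (h : ∀ ω ∈ A, (∃ t, P₀ (cyl ω t) = 0) ∨
      α ≤ Filter.limsup (fun t => P₁ (cyl ω t) / P₀ (cyl ω t)) atTop) :
    α * P₀ A ≤ P₁ A :=
  measure_ge_of_limsup_ratio_ge_general P₀ P₁ α A h
end

section
/- Let f₀, f₁ be forecasting strategies whose induced measures P₀^f, P₁^f on Ω^∞ are mutually singular (there is a measurable set A with P₀^f(A) = 1 and P₁^f(A) = 0). If T is a reasonable comparison test, then P_i^f({T(·,f) = i}) = 1 for each i ∈ {0,1}. -/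
open MeasureTheory Filter Set
open scoped ENNReal

/-- A forecasting strategy: it maps a finite history of (outcome, forecast of expert 0,
forecast of expert 1) triples to a probability (of the outcome `true`) in `[0,1]`. -/
structure Strategy where
  f : List (Bool × ℝ≥0∞ × ℝ≥0∞) → ℝ≥0∞
  le_one : ∀ h, f h ≤ 1

/-- The probability that a forecast `p` (probability of `true`) assigns to outcome `b`. -/
noncomputable def fprob (p : ℝ≥0∞) (b : Bool) : ℝ≥0∞ := if b then p else 1 - p

/-- The play-path history of length `n` induced by the realization `ω` and the ordered
pair of forecasting strategies `(f₀, f₁)`. -/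
def hist (ω : BinSeq) (f₀ f₁ : Strategy) : ℕ → List (Bool × ℝ≥0∞ × ℝ≥0∞)
  | 0 => []
  | n + 1 =>
      hist ω f₀ f₁ n ++ [(ω n, f₀.f (hist ω f₀ f₁ n), f₁.f (hist ω f₀ f₁ n))]

/-- The infinite play path induced by `(ω, f₀, f₁)`. -/
def play (ω : BinSeq) (f₀ f₁ : Strategy) (n : ℕ) : Bool × ℝ≥0∞ × ℝ≥0∞ :=
  (ω n, f₀.f (hist ω f₀ f₁ n), f₁.f (hist ω f₀ f₁ n))

/-- `P₀` and `P₁` are the pair of probability measures induced by the ordered pair of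
forecasting strategies `(f₀, f₁)`: on each cylinder they are the product of the
corresponding one-step-ahead forecasts along the play path. -/
def Induces (f₀ f₁ : Strategy) (P₀ P₁ : Measure BinSeq) : Prop :=
  IsProbabilityMeasure P₀ ∧ IsProbabilityMeasure P₁ ∧
  (∀ ω t, P₀ (cyl ω t) = ∏ n ∈ Finset.range t, fprob (f₀.f (hist ω f₀ f₁ n)) (ω n)) ∧
  (∀ ω t, P₁ (cyl ω t) = ∏ n ∈ Finset.range t, fprob (f₁.f (hist ω f₀ f₁ n)) (ω n))

/-- A comparison test: given a realization and an ordered pair of forecasting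
strategies, it outputs a verdict (intended values: `0`, `1/2`, `1`). -/
abbrev Test := BinSeq → Strategy → Strategy → ℝ

/-- The test takes only the values `0`, `1/2`, `1`. -/
def TestValued (T : Test) : Prop := ∀ ω f₀ f₁, T ω f₀ f₁ = 0 ∨ T ω f₀ f₁ = 1/2 ∨ T ω f₀ f₁ = 1

/-- Anonymity: the verdict does not depend on the identity of the experts. -/
def Anonymous (T : Test) : Prop := ∀ ω f₀ f₁, T ω f₀ f₁ = 1 - T ω f₁ f₀

/-- Non-counterfactual: the verdict depends only on the realized play path. -/
def NonCounterfactual (T : Test) : Prop :=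
  ∃ T' : (ℕ → Bool × ℝ≥0∞ × ℝ≥0∞) → ℝ, ∀ ω f₀ f₁, T ω f₀ f₁ = T' (play ω f₀ f₁)

/-- Reasonableness: for every pair of strategies with induced measures `(P₀, P₁)` and
every measurable set that one of the induced measures deems positive while the other
deems null, with positive probability the test points at the corresponding expert. -/
def Reasonable (T : Test) : Prop :=
  ∀ f₀ f₁ : Strategy, ∀ P₀ P₁ : Measure BinSeq, Induces f₀ f₁ P₀ P₁ →
    ∀ A : Set BinSeq, MeasurableSet A →
      ((0 < P₀ A ∧ P₁ A = 0) → 0 < P₀ (A ∩ {ω | T ω f₀ f₁ = 0})) ∧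
      ((0 < P₁ A ∧ P₀ A = 0) → 0 < P₁ (A ∩ {ω | T ω f₀ f₁ = 1}))

theorem measure_eq_measure_univ_of_forall_pos_inter {α : Type*} [MeasurableSpace α]
    {μ : Measure α} {A S : Set α} (hA : MeasurableSet A) (hAc : μ Aᶜ = 0)
    (h : ∀ B, MeasurableSet B → B ⊆ A → 0 < μ B → 0 < μ (B ∩ S)) :
    μ S = μ univ := by
  -- `S` need not be measurable, so the argument runs on its measurable hull `U`.
  set U := toMeasurable μ S
  have hUA : μ (Uᶜ ∩ A) = 0 := by
    by_contra hne
    have hpos := h _ ((measurableSet_toMeasurable μ S).compl.inter hA) inter_subset_right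
      (pos_iff_ne_zero.2 hne)
    have hempty : Uᶜ ∩ A ∩ S = ∅ :=
      eq_empty_of_forall_notMem fun _ hx ↦ hx.1.1 (subset_toMeasurable μ S hx.2)
    rw [hempty, measure_empty] at hpos
    exact hpos.false
  have hU : μ Uᶜ = 0 :=
    measure_mono_null (fun x hx ↦ (em (x ∈ A)).imp (⟨hx, ·⟩) id)
      (measure_union_null hUA hAc)
  rw [← measure_toMeasurable S]
  exact measure_congr (ae_eq_univ.2 hU)

section

variable {T : Test} {f₀ f₁ : Strategy} {P₀ P₁ : Measure BinSeq}

theorem Reasonable.measure_verdict_zero_eq_one (hT : Reasonable T) (hInd : Induces f₀ f₁ P₀ P₁)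
    {A : Set BinSeq} (hA : MeasurableSet A) (hA₀ : P₀ Aᶜ = 0) (hA₁ : P₁ A = 0) :
    P₀ {ω | T ω f₀ f₁ = 0} = 1 := by
  have : IsProbabilityMeasure P₀ := hInd.1
  rw [← measure_univ (μ := P₀)]
  exact measure_eq_measure_univ_of_forall_pos_inter hA hA₀ fun B hB hBA hpos ↦
    (hT f₀ f₁ P₀ P₁ hInd B hB).1 ⟨hpos, measure_mono_null hBA hA₁⟩

theorem Reasonable.measure_verdict_one_eq_one (hT : Reasonable T) (hInd : Induces f₀ f₁ P₀ P₁)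
    {A : Set BinSeq} (hA : MeasurableSet A) (hA₀ : P₀ A = 0) (hA₁ : P₁ Aᶜ = 0) :
    P₁ {ω | T ω f₀ f₁ = 1} = 1 := by
  have : IsProbabilityMeasure P₁ := hInd.2.1
  rw [← measure_univ (μ := P₁)]
  exact measure_eq_measure_univ_of_forall_pos_inter hA hA₁ fun B hB hBA hpos ↦
    (hT f₀ f₁ P₀ P₁ hInd B hB).2 ⟨hpos, measure_mono_null hBA hA₀⟩

end

/-- If the induced measures of two forecasting strategies are mutually singular, then a
reasonable test identifies each expert with probability one under his own measure. -/
theorem reasonable_of_mutually_singular (T : Test) (hT : Reasonable T)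
    (f₀ f₁ : Strategy) (P₀ P₁ : Measure BinSeq) (hInd : Induces f₀ f₁ P₀ P₁)
    (hsing : ∃ A : Set BinSeq, MeasurableSet A ∧ P₀ A = 1 ∧ P₁ A = 0) :
    P₀ {ω | T ω f₀ f₁ = 0} = 1 ∧ P₁ {ω | T ω f₀ f₁ = 1} = 1 := by
  obtain ⟨A, hA, hA₀, hA₁⟩ := hsing
  have : IsProbabilityMeasure P₀ := hInd.1
  have hAc₀ : P₀ Aᶜ = 0 := (prob_compl_eq_zero_iff hA).2 hA₀
  exact ⟨hT.measure_verdict_zero_eq_one hInd hA hAc₀ hA₁,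
    hT.measure_verdict_one_eq_one hInd hA.compl hAc₀ (by rwa [compl_compl])⟩
end

section
/- Let P₀, P₁ be Borel probability measures on Ω^∞ = {0,1}^ℕ such that P₀ and P₁ agree on all cylinders whose prefix differs from the all-ones prefix in some coordinate beyond the first, P₀ assigns probability 1−ε to outcome 1 at the first stage while P₁ assigns it probability 1, and both proceed deterministically predicting 1 thereafter (so P₁ is the Dirac measure at the all-ones sequence ω̄ = (1,1,1,...) and P₀ = (1−ε)·δ_{ω̄} + ε·δ_{ω'} for the sequence ω' = (0,1,1,...)). Then the likelihood-ratio test L, which declares expert 1 superior at ω when liminf_t P₁(ω^t)/P₀(ω^t) > 1, declares expert 1 superior at ω̄, and hence P₀({L = 1}) ≥ 1 − ε. In particular, L is not error-free, and its error probability can be made arbitrarily close to 1. -/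
open MeasureTheory Filter Set
open scoped ENNReal

lemma cyl_measurable (ω : BinSeq) (t : ℕ) : MeasurableSet (cyl ω t) := by
  have : cyl ω t = ⋂ s ∈ Finset.range t, (fun ω' : BinSeq => ω' s) ⁻¹' {ω s} := by
    ext ω'; simp [cyl]
  rw [this]
  exact MeasurableSet.biInter (Set.to_countable _)
    (fun s _ => (measurable_pi_apply s) (MeasurableSet.singleton _))

/-- The Al-Najjar–Weinstein likelihood-ratio test is not error-free, with an error
probability arbitrarily close to one: with `ω̄ = (1,1,1,...)`, `ω' = (0,1,1,...)`,
`P₁ = δ_ω̄` and `P₀ = (1-ε)·δ_ω̄ + ε·δ_ω'`, the test declares expert 1 superior at `ω̄`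
(the liminf of the likelihood ratio exceeds 1), hence `P₀({L = 1}) ≥ 1 - ε > 0`. -/
theorem likelihood_ratio_test_not_error_free
    (ε : ℝ≥0∞) (hε0 : 0 < ε) (hε1 : ε < 1)
    (ωbar ω' : BinSeq) (hωbar : ωbar = fun _ => true)
    (hω' : ω' = fun n => decide (n ≠ 0))
    (P₀ P₁ : Measure BinSeq)
    (hP₁ : P₁ = Measure.dirac ωbar)
    (hP₀ : P₀ = (1 - ε) • Measure.dirac ωbar + ε • Measure.dirac ω') :
    1 < Filter.liminf (fun t => P₁ (cyl ωbar t) / P₀ (cyl ωbar t)) atTop ∧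
    1 - ε ≤ P₀ {ω | 1 < Filter.liminf (fun t => P₁ (cyl ω t) / P₀ (cyl ω t)) atTop} ∧
    0 < P₀ {ω | 1 < Filter.liminf (fun t => P₁ (cyl ω t) / P₀ (cyl ω t)) atTop} := by
  have hε1' : 1 - ε ≠ 0 := by
    rw [Ne, tsub_eq_zero_iff_le]
    exact hε1.not_ge
  have hεlt : 1 - ε < 1 := ENNReal.sub_lt_self ENNReal.one_ne_top one_ne_zero hε0.ne'
  have hmem : ∀ t, ωbar ∈ cyl ωbar t := fun t s _ => rfl
  have hnot : ∀ t, 1 ≤ t → ω' ∉ cyl ωbar t := by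
    intro t ht h
    have := h 0 ht
    simp [hω', hωbar] at this
  have hratio : ∀ t, 1 ≤ t → P₁ (cyl ωbar t) / P₀ (cyl ωbar t) = 1 / (1 - ε) := by
    intro t ht
    have h1 : P₁ (cyl ωbar t) = 1 := by
      rw [hP₁, Measure.dirac_apply_of_mem (hmem t)]
    have h0 : P₀ (cyl ωbar t) = 1 - ε := by
      rw [hP₀, Measure.add_apply, Measure.smul_apply, Measure.smul_apply,
        smul_eq_mul, smul_eq_mul, Measure.dirac_apply_of_mem (hmem t),
        Measure.dirac_apply' _ (cyl_measurable _ _),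
        Set.indicator_of_notMem (hnot t ht)]
      simp
    rw [h1, h0]
  have hliminf : Filter.liminf (fun t => P₁ (cyl ωbar t) / P₀ (cyl ωbar t)) atTop
      = 1 / (1 - ε) := by
    rw [Filter.liminf_congr (Filter.eventually_atTop.mpr ⟨1, hratio⟩)]
    exact Filter.liminf_const _
  have hbar : 1 < Filter.liminf (fun t => P₁ (cyl ωbar t) / P₀ (cyl ωbar t)) atTop := by
    rw [hliminf]
    rw [ENNReal.lt_div_iff_mul_lt (Or.inl hε1') (Or.inl (hεlt.trans ENNReal.one_lt_top).ne)]
    simpa using hεlt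
  set S := {ω : BinSeq | 1 < Filter.liminf (fun t => P₁ (cyl ω t) / P₀ (cyl ω t)) atTop}
    with hS
  have hmemS : ωbar ∈ S := hbar
  have hle : 1 - ε ≤ P₀ S := by
    have h1 : (1 : ℝ≥0∞) ≤ Measure.dirac ωbar S := by
      rw [show (1:ℝ≥0∞) = Measure.dirac ωbar {ωbar} from
        (Measure.dirac_apply_of_mem (Set.mem_singleton _)).symm]
      exact measure_mono (Set.singleton_subset_iff.mpr hmemS)
    calc 1 - ε = (1 - ε) * 1 := (mul_one _).symm
      _ ≤ (1 - ε) * Measure.dirac ωbar S := by gcongr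
      _ ≤ (1 - ε) * Measure.dirac ωbar S + ε * Measure.dirac ω' S := le_add_right le_rfl
      _ = P₀ S := by
            rw [hP₀, Measure.add_apply, Measure.smul_apply, Measure.smul_apply,
              smul_eq_mul, smul_eq_mul]
  exact ⟨hbar, hle, lt_of_lt_of_le (tsub_pos_of_lt hε1) hle⟩
end
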